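/- arXiv:1906.00350 — 5 statements merged into one kernel-verified Lean document; each statement's English description precedes it below -/
import Mathlib

section
/- Let x_1, ..., x_{n+1} be points in [0,1]^p with p ≥ 2, and let r_i be the distance from x_i to its nearest neighbor among the other points. Then (1/(n+1)) ∑_i r_i^2 ≤ (2^p (1+√p)^p / ((n+1) V_p))^{2/p}, where V_p is the volume of the unit p-ball. -/
/-!
The balls of radius `r i / 2` around the points are pairwise disjoint, and since `r i ≤ √p` they
all lie in the cube `[-√p/2, 1 + √p/2]^p` of volume `(1 + √p)^p`; comparing volumes gives
`∑ r i ^ p ≤ 2^p (1 + √p)^p / V_p`. Jensen's inequality for `t ↦ t^(p/2)` turns this bound on the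
`p`-th powers into the bound on the mean square.
-/

open MeasureTheory Metric Function

/-- With no other point the infimum is over an empty type, and is `0`. -/
noncomputable def nearestNeighborDist {ι X : Type*} [PseudoMetricSpace X] (x : ι → X) (i : ι) : ℝ :=
  ⨅ j : {j : ι // j ≠ i}, dist (x j) (x i)

section NearestNeighbor

variable {ι X : Type*} [PseudoMetricSpace X] (x : ι → X)

theorem nearestNeighborDist_nonneg (i : ι) : 0 ≤ nearestNeighborDist x i :=
  Real.iInf_nonneg fun _ ↦ dist_nonneg

theorem nearestNeighborDist_le_dist {i j : ι} (h : j ≠ i) :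
    nearestNeighborDist x i ≤ dist (x j) (x i) :=
  ciInf_le ⟨0, by rintro _ ⟨_, rfl⟩; exact dist_nonneg⟩ (⟨j, h⟩ : {j : ι // j ≠ i})

theorem nearestNeighborDist_le_of_forall_dist_le {D : ℝ} (hD : 0 ≤ D)
    (h : ∀ i j, dist (x i) (x j) ≤ D) (i : ι) : nearestNeighborDist x i ≤ D := by
  by_cases hne : ∃ j, j ≠ i
  · obtain ⟨j, hj⟩ := hne
    exact (nearestNeighborDist_le_dist x hj).trans (h j i)
  · push Not at hne
    have : IsEmpty {j : ι // j ≠ i} := ⟨fun j ↦ j.2 (hne j)⟩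
    simpa [nearestNeighborDist, Real.iInf_of_isEmpty] using hD

theorem pairwise_disjoint_ball_half_nearestNeighborDist :
    Pairwise (Disjoint on fun i ↦ ball (x i) (nearestNeighborDist x i / 2)) := by
  intro i j hij
  apply ball_disjoint_ball
  have hi := nearestNeighborDist_le_dist x hij.symm
  have hj := nearestNeighborDist_le_dist x hij
  rw [dist_comm] at hi
  linarith

end NearestNeighbor

section Packing

variable {E : Type*} [NormedAddCommGroup E] [NormedSpace ℝ E] [FiniteDimensional ℝ E]
  [Nontrivial E] [MeasurableSpace E] [BorelSpace E] (μ : Measure E) [μ.IsAddHaarMeasure]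

theorem sum_pow_finrank_mul_measure_ball_le {ι : Type*} [Fintype ι] {x : ι → E} {ρ : ι → ℝ}
    (hρ : ∀ i, 0 ≤ ρ i) (hdisj : Pairwise (Disjoint on fun i ↦ ball (x i) (ρ i)))
    {S : Set E} (hS : ∀ i, ball (x i) (ρ i) ⊆ S) (hSfin : μ S ≠ ⊤) :
    (∑ i, ρ i ^ Module.finrank ℝ E) * (μ (ball 0 1)).toReal ≤ (μ S).toReal := by
  have hballs : ∑ i, μ (ball (x i) (ρ i)) ≤ μ S := by
    rw [← tsum_fintype (L := .unconditional _), ← measure_iUnion hdisj fun _ ↦ measurableSet_ball]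
    exact measure_mono (Set.iUnion_subset hS)
  rw [← ENNReal.toReal_ofReal (Finset.sum_nonneg fun i _ ↦ pow_nonneg (hρ i) _),
    ← ENNReal.toReal_mul]
  refine ENNReal.toReal_mono hSfin (le_trans (le_of_eq ?_) hballs)
  rw [ENNReal.ofReal_sum_of_nonneg fun i _ ↦ pow_nonneg (hρ i) _, Finset.sum_mul]
  simp only [Measure.addHaar_ball μ _ (hρ _)]

end Packing

section PowerMean

variable {ι : Type*} [Fintype ι] [Nonempty ι] {p : ℕ} {a : ι → ℝ}

theorem rpow_mean_sq_le_mean_pow (hp : 2 ≤ p) (ha : ∀ i, 0 ≤ a i) :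
    ((∑ i, a i ^ 2) / Fintype.card ι) ^ ((p : ℝ) / 2) ≤ (∑ i, a i ^ p) / Fintype.card ι := by
  have hN : (0 : ℝ) < Fintype.card ι := Nat.cast_pos.mpr Fintype.card_pos
  have hw : ∑ _i : ι, (1 / (Fintype.card ι : ℝ)) = 1 := by
    rw [Finset.sum_const, Finset.card_univ, nsmul_eq_mul, mul_one_div_cancel hN.ne']
  have hq : (1 : ℝ) ≤ p / 2 := by
    rw [le_div_iff₀ two_pos, one_mul]
    exact_mod_cast hp
  have hsq_rpow (i : ι) : (a i ^ 2) ^ ((p : ℝ) / 2) = a i ^ p := by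
    rw [← Real.rpow_natCast, ← Real.rpow_mul (ha i), Nat.cast_ofNat,
      mul_div_cancel₀ _ two_ne_zero, Real.rpow_natCast]
  have := Real.rpow_arith_mean_le_arith_mean_rpow Finset.univ (fun _ ↦ 1 / (Fintype.card ι : ℝ))
    (fun i ↦ a i ^ 2) (fun _ _ ↦ by positivity) hw (fun _ _ ↦ sq_nonneg _) hq
  simpa only [hsq_rpow, one_div_mul_eq_div, ← Finset.sum_div] using this

theorem sum_sq_div_card_le_of_sum_pow_le (hp : 2 ≤ p) (ha : ∀ i, 0 ≤ a i) {B : ℝ}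
    (hB : ∑ i, a i ^ p ≤ B) :
    (∑ i, a i ^ 2) / Fintype.card ι ≤ (B / Fintype.card ι) ^ ((2 : ℝ) / p) := by
  set A := (∑ i, a i ^ 2) / Fintype.card ι
  have hA : 0 ≤ A := by positivity
  calc A = (A ^ ((p : ℝ) / 2)) ^ ((2 : ℝ) / p) := by
        rw [← Real.rpow_mul hA, show (p : ℝ) / 2 * (2 / p) = 1 by field_simp, Real.rpow_one]
    _ ≤ (B / Fintype.card ι) ^ ((2 : ℝ) / p) := by
        gcongr
        exact (rpow_mean_sq_le_mean_pow hp ha).trans (by gcongr)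

end PowerMean

section Cube

variable {κ : Type*} [Fintype κ]

theorem EuclideanSpace.dist_le_sqrt_card_of_mem_Icc {x y : EuclideanSpace ℝ κ}
    (hx : ∀ k, x k ∈ Set.Icc (0 : ℝ) 1) (hy : ∀ k, y k ∈ Set.Icc (0 : ℝ) 1) :
    dist x y ≤ √(Fintype.card κ) := by
  rw [EuclideanSpace.dist_eq]
  gcongr
  calc ∑ k, dist (x k) (y k) ^ 2 ≤ ∑ _k : κ, (1 : ℝ) := by
        gcongr with k
        exact pow_le_one₀ dist_nonneg
          (abs_sub_le_of_nonneg_of_le (hx k).1 (hx k).2 (hy k).1 (hy k).2)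
    _ = Fintype.card κ := by simp

theorem EuclideanSpace.ball_subset_setOf_mem_Icc {x : EuclideanSpace ℝ κ} {a b : ℝ}
    (hx : ∀ k, x k ∈ Set.Icc a b) (δ : ℝ) :
    ball x δ ⊆ {z | ∀ k, z k ∈ Set.Icc (a - δ) (b + δ)} := by
  intro z hz k
  have hzk : |z k - x k| < δ :=
    (Real.dist_eq _ _ ▸ PiLp.dist_apply_le z x k).trans_lt (mem_ball.mp hz)
  rw [abs_lt] at hzk
  constructor <;> linarith [(hx k).1, (hx k).2]

theorem EuclideanSpace.volume_setOf_mem_Icc (a b : ℝ) :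
    volume {z : EuclideanSpace ℝ κ | ∀ k, z k ∈ Set.Icc a b}
      = ENNReal.ofReal (b - a) ^ Fintype.card κ := by
  have : {z : EuclideanSpace ℝ κ | ∀ k, z k ∈ Set.Icc a b}
      = WithLp.ofLp ⁻¹' Set.univ.pi fun _ ↦ Set.Icc a b := by
    ext z; simp only [Set.mem_ofPred_eq, Set.mem_preimage, Set.mem_univ_pi]
  rw [this, (PiLp.volume_preserving_ofLp κ).measure_preimage
    (MeasurableSet.univ_pi fun _ ↦ measurableSet_Icc).nullMeasurableSet, volume_pi_pi]
  simp

end Cube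

theorem sum_nearestNeighborDist_pow_mul_volume_ball_le {κ ι : Type*} [Fintype κ] [Nonempty κ]
    [Fintype ι] (x : ι → EuclideanSpace ℝ κ) (hx : ∀ i k, x i k ∈ Set.Icc (0 : ℝ) 1) :
    (∑ i, nearestNeighborDist x i ^ Fintype.card κ) *
        (volume (ball (0 : EuclideanSpace ℝ κ) 1)).toReal
      ≤ 2 ^ Fintype.card κ * (1 + √(Fintype.card κ)) ^ Fintype.card κ := by
  set d := Fintype.card κ
  have hradius (i : ι) : nearestNeighborDist x i / 2 ≤ √d / 2 := by
    gcongr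
    exact nearestNeighborDist_le_of_forall_dist_le x (Real.sqrt_nonneg _)
      (fun i j ↦ EuclideanSpace.dist_le_sqrt_card_of_mem_Icc (hx i) (hx j)) i
  have hsub (i : ι) : ball (x i) (nearestNeighborDist x i / 2)
      ⊆ {z | ∀ k, z k ∈ Set.Icc (0 - √d / 2) (1 + √d / 2)} :=
    (ball_subset_ball (hradius i)).trans (EuclideanSpace.ball_subset_setOf_mem_Icc (hx i) _)
  have hpack := sum_pow_finrank_mul_measure_ball_le volume
    (fun i ↦ div_nonneg (nearestNeighborDist_nonneg x i) zero_le_two)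
    (pairwise_disjoint_ball_half_nearestNeighborDist x) hsub
    (by rw [EuclideanSpace.volume_setOf_mem_Icc]; finiteness)
  rw [finrank_euclideanSpace, EuclideanSpace.volume_setOf_mem_Icc,
    show 1 + √d / 2 - (0 - √d / 2) = 1 + √d by ring, ENNReal.toReal_pow,
    ENNReal.toReal_ofReal (by positivity)] at hpack
  simp only [div_pow, ← Finset.sum_div] at hpack
  rw [div_mul_eq_mul_div, div_le_iff₀' (by positivity)] at hpack
  exact hpack

theorem stmt_1_general (p n : ℕ) (hp : 2 ≤ p)
    (x : Fin (n + 1) → EuclideanSpace ℝ (Fin p))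
    (hx : ∀ i, ∀ k, x i k ∈ Set.Icc (0 : ℝ) 1)
    (r : Fin (n + 1) → ℝ)
    (hr : ∀ i, r i = ⨅ j : {j : Fin (n + 1) // j ≠ i}, dist (x j) (x i)) :
    (1 / (n + 1 : ℝ)) * ∑ i, (r i) ^ 2
      ≤ (2 ^ p * (1 + Real.sqrt p) ^ p /
          ((n + 1 : ℝ) * (volume (Metric.ball (0 : EuclideanSpace ℝ (Fin p)) 1)).toReal))
          ^ ((2 : ℝ) / p) := by
  obtain rfl : r = nearestNeighborDist x := funext hr
  have : Nonempty (Fin p) := ⟨⟨0, by omega⟩⟩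
  have hV : 0 < (volume (ball (0 : EuclideanSpace ℝ (Fin p)) 1)).toReal :=
    ENNReal.toReal_pos (measure_ball_pos _ _ one_pos).ne' measure_ball_lt_top.ne
  have hsum : ∑ i, nearestNeighborDist x i ^ p
      ≤ 2 ^ p * (1 + √p) ^ p / (volume (ball (0 : EuclideanSpace ℝ (Fin p)) 1)).toReal := by
    rw [le_div_iff₀ hV]
    simpa only [Fintype.card_fin] using sum_nearestNeighborDist_pow_mul_volume_ball_le x hx
  have := sum_sq_div_card_le_of_sum_pow_le hp (nearestNeighborDist_nonneg x) hsum
  rwa [Fintype.card_fin, Nat.cast_succ, div_div, mul_comm _ ((n : ℝ) + 1), ← one_div_mul_eq_div]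
    at this

/-- Mean squared nearest-neighbor distance bound for points in the unit cube. -/
theorem stmt_1 (p n : ℕ) (hp : 2 ≤ p) (hn : 1 ≤ n)
    (x : Fin (n + 1) → EuclideanSpace ℝ (Fin p))
    (hx : ∀ i, ∀ k, x i k ∈ Set.Icc (0 : ℝ) 1)
    (r : Fin (n + 1) → ℝ)
    (hr : ∀ i, r i = ⨅ j : {j : Fin (n + 1) // j ≠ i}, dist (x j) (x i)) :
    (1 / (n + 1 : ℝ)) * ∑ i, (r i) ^ 2
      ≤ (2 ^ p * (1 + Real.sqrt p) ^ p /
          ((n + 1 : ℝ) * (volume (Metric.ball (0 : EuclideanSpace ℝ (Fin p)) 1)).toReal))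
          ^ ((2 : ℝ) / p) :=
  stmt_1_general p n hp x hx r hr
end

section
/- Let X, X_1, ..., X_n be random points in [0,1]^p (p ≥ 2), and let X_{(1)} denote the nearest neighbor of X among X_1,...,X_n. If the joint distribution of (X, X_1,...,X_n) is exchangeable, then E‖X_{(1)} - X‖^2 ≤ c_p (1/(n+1))^{2/p}, where c_p = 4(1+√p)^2 / V_p^{2/p} and V_p is the volume of the unit p-ball. -/
/-!
Write `r j = nnDist (x ∘ Equiv.swap 0 j)` for the distance from `x j` to its nearest neighbour
among `n + 1` points of the unit cube. The balls `ball (x j) (r j / 2)` are pairwise disjoint and,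
since `r j ≤ √p`, lie in the cube enlarged by `√p / 2` on each side; comparing volumes gives
`∑ j, r j ^ p ≤ (2 * (1 + √p)) ^ p / V_p` for every configuration. By exchangeability each `r j`
has the law of `r 0`, so `(n + 1) * E[r 0 ^ p]` obeys the same bound, and the Lyapunov inequality
`E[r 0 ^ 2] ≤ E[r 0 ^ p] ^ (2 / p)` turns this into the claim.
-/

open MeasureTheory Metric ENNReal

section Box

variable {ι : Type*} [Fintype ι]

def euclideanBox (ι : Type*) (a b : ℝ) : Set (EuclideanSpace ℝ ι) := {y | ∀ k, y k ∈ Set.Icc a b}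

theorem volume_euclideanBox {a b : ℝ} (hab : a ≤ b) :
    volume (euclideanBox ι a b) = ENNReal.ofReal ((b - a) ^ Fintype.card ι) := by
  have hbox : euclideanBox ι a b = WithLp.ofLp ⁻¹' Set.univ.pi fun _ => Set.Icc a b := by
    ext y; simp only [Set.mem_preimage, Set.mem_univ_pi]; rfl
  rw [hbox, (PiLp.volume_preserving_ofLp ι).measure_preimage
    (MeasurableSet.univ_pi fun _ => measurableSet_Icc).nullMeasurableSet,
    volume_pi_pi, Real.volume_Icc, Finset.prod_const, Finset.card_univ,
    ENNReal.ofReal_pow (sub_nonneg.mpr hab)]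

theorem dist_le_of_mem_euclideanBox {a b : ℝ} {x y : EuclideanSpace ℝ ι}
    (hx : x ∈ euclideanBox ι a b) (hy : y ∈ euclideanBox ι a b) :
    dist x y ≤ √(Fintype.card ι) * (b - a) := by
  rcases isEmpty_or_nonempty ι with hι | ⟨⟨k₀⟩⟩
  · simp [Subsingleton.elim x y]
  have hab : 0 ≤ b - a := sub_nonneg.mpr ((hx k₀).1.trans (hx k₀).2)
  calc dist x y = √(∑ k, dist (x k) (y k) ^ 2) := EuclideanSpace.dist_eq x y
    _ ≤ √(∑ _k : ι, (b - a) ^ 2) := Real.sqrt_le_sqrt <| Finset.sum_le_sum fun k _ =>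
        pow_le_pow_left₀ dist_nonneg (Real.dist_le_of_mem_Icc (hx k) (hy k)) 2
    _ = √(Fintype.card ι) * (b - a) := by
        rw [Finset.sum_const, Finset.card_univ, nsmul_eq_mul, Real.sqrt_mul (by positivity),
          Real.sqrt_sq hab]

theorem ball_subset_euclideanBox {a b r : ℝ} {x : EuclideanSpace ℝ ι}
    (hx : x ∈ euclideanBox ι a b) : ball x r ⊆ euclideanBox ι (a - r) (b + r) := by
  intro y hy k
  have hyk : dist (y k) (x k) < r := (PiLp.dist_apply_le y x k).trans_lt (mem_ball.mp hy)
  rw [Real.dist_eq, abs_lt] at hyk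
  constructor <;> linarith [(hx k).1, (hx k).2]

end Box

section NearestNeighbor

variable {E : Type*} [PseudoMetricSpace E] {n : ℕ}

-- For `n = 0` this is `0`, the value of `⨅` over an empty family of reals.
noncomputable def nnDist (x : Fin (n + 1) → E) : ℝ := ⨅ i : Fin n, dist (x i.succ) (x 0)

theorem nnDist_nonneg (x : Fin (n + 1) → E) : 0 ≤ nnDist x :=
  Real.iInf_nonneg fun _ => dist_nonneg

theorem nnDist_le_dist (x : Fin (n + 1) → E) (i : Fin n) : nnDist x ≤ dist (x i.succ) (x 0) :=
  ciInf_le ⟨0, by rintro _ ⟨i, rfl⟩; exact dist_nonneg⟩ i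

theorem nnDist_le_of_forall_dist_le {x : Fin (n + 1) → E} {D : ℝ} (hD : 0 ≤ D)
    (h : ∀ i : Fin n, dist (x i.succ) (x 0) ≤ D) : nnDist x ≤ D := by
  rcases isEmpty_or_nonempty (Fin n) with hn | hn
  · rwa [nnDist, Real.iInf_of_isEmpty]
  · exact ciInf_le_of_le ⟨0, by rintro _ ⟨i, rfl⟩; exact dist_nonneg⟩ (Classical.arbitrary _)
      (h _)

theorem nnDist_comp_swap_le (x : Fin (n + 1) → E) {j k : Fin (n + 1)} (hjk : j ≠ k) :
    nnDist (x ∘ Equiv.swap 0 j) ≤ dist (x k) (x j) := by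
  obtain ⟨i, hi⟩ := Fin.exists_succ_eq.mpr (show Equiv.swap 0 j k ≠ 0 by
    rw [Ne, Equiv.swap_apply_eq_iff, Equiv.swap_apply_left]; exact hjk.symm)
  simpa [hi] using nnDist_le_dist (x ∘ Equiv.swap 0 j) i

theorem pairwise_disjoint_ball_nnDist (x : Fin (n + 1) → E) :
    Pairwise (Function.onFun Disjoint fun j => ball (x j) (nnDist (x ∘ Equiv.swap 0 j) / 2)) := by
  intro j k hjk
  apply ball_disjoint_ball
  have hj := nnDist_comp_swap_le x hjk
  have hk := nnDist_comp_swap_le x hjk.symm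
  rw [dist_comm] at hj
  linarith

theorem measurable_nnDist [MeasurableSpace E] [OpensMeasurableSpace E]
    [SecondCountableTopology E] : Measurable (nnDist : (Fin (n + 1) → E) → ℝ) :=
  Measurable.iInf fun i => (measurable_pi_apply i.succ).dist (measurable_pi_apply 0)

end NearestNeighbor

theorem sum_pow_mul_measure_ball_le {E : Type*} [NormedAddCommGroup E] [NormedSpace ℝ E]
    [MeasurableSpace E] [BorelSpace E] [FiniteDimensional ℝ E] [Nontrivial E]
    (μ : Measure E) [μ.IsAddHaarMeasure] {ι : Type*} [Fintype ι] {x : ι → E} {s : ι → ℝ}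
    (hs : ∀ i, 0 ≤ s i) (hdisj : Pairwise (Function.onFun Disjoint fun i => ball (x i) (s i)))
    {K : Set E} (hK : ∀ i, ball (x i) (s i) ⊆ K) :
    (∑ i, ENNReal.ofReal (s i ^ Module.finrank ℝ E)) * μ (ball 0 1) ≤ μ K := by
  calc (∑ i, ENNReal.ofReal (s i ^ Module.finrank ℝ E)) * μ (ball 0 1)
      = μ (⋃ i, ball (x i) (s i)) := by
        rw [measure_iUnion hdisj fun i => measurableSet_ball, tsum_fintype, Finset.sum_mul]
        exact Finset.sum_congr rfl fun i _ => (Measure.addHaar_ball μ (x i) (hs i)).symm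
    _ ≤ μ K := measure_mono (Set.iUnion_subset hK)

theorem sum_nnDist_pow_le_of_mem_unitCube {p n : ℕ} (hp : 1 ≤ p)
    (x : Fin (n + 1) → EuclideanSpace ℝ (Fin p)) (hx : ∀ i, x i ∈ euclideanBox (Fin p) 0 1) :
    ∑ j, nnDist (x ∘ Equiv.swap 0 j) ^ p
      ≤ (2 * (1 + √p)) ^ p / (volume (ball (0 : EuclideanSpace ℝ (Fin p)) 1)).toReal := by
  have : Nontrivial (EuclideanSpace ℝ (Fin p)) :=
    Module.nontrivial_of_finrank_pos (R := ℝ) (by rw [finrank_euclideanSpace_fin]; omega)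
  set r := fun j => nnDist (x ∘ Equiv.swap 0 j)
  set V := volume (ball (0 : EuclideanSpace ℝ (Fin p)) 1)
  have hV : 0 < V.toReal := ENNReal.toReal_pos (measure_ball_pos _ _ one_pos).ne'
    measure_ball_lt_top.ne
  have hr : ∀ j, 0 ≤ r j / 2 := fun j => by have := nnDist_nonneg (x ∘ Equiv.swap 0 j); positivity
  have hr_le : ∀ j, r j ≤ √p := fun j => nnDist_le_of_forall_dist_le (Real.sqrt_nonneg _)
    fun i => by simpa using dist_le_of_mem_euclideanBox (hx _) (hx _)
  have hsub : ∀ j, ball (x j) (r j / 2) ⊆ euclideanBox (Fin p) (0 - √p / 2) (1 + √p / 2) :=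
    fun j => (ball_subset_ball (by linarith [hr_le j])).trans (ball_subset_euclideanBox (hx j))
  have hpack := sum_pow_mul_measure_ball_le volume hr (pairwise_disjoint_ball_nnDist x) hsub
  have hsum : 0 ≤ ∑ j, (r j / 2) ^ p := Finset.sum_nonneg fun j _ => pow_nonneg (hr j) p
  rw [finrank_euclideanSpace_fin, volume_euclideanBox (by linarith [Real.sqrt_nonneg p]),
    Fintype.card_fin, ← ENNReal.ofReal_sum_of_nonneg fun j _ => pow_nonneg (hr j) p,
    ← ENNReal.ofReal_toReal measure_ball_lt_top.ne, ← ENNReal.ofReal_mul hsum,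
    show 1 + √p / 2 - (0 - √p / 2) = 1 + √p by ring, ENNReal.ofReal_le_ofReal_iff (by positivity)]
    at hpack
  calc ∑ j, r j ^ p = 2 ^ p * ∑ j, (r j / 2) ^ p := by
        rw [Finset.mul_sum]; congr! 1 with j; rw [← mul_pow, mul_div_cancel₀ _ two_ne_zero]
    _ ≤ 2 ^ p * ((1 + √p) ^ p / V.toReal) := by
        gcongr; rw [le_div_iff₀ hV]; linarith
    _ = (2 * (1 + √p)) ^ p / V.toReal := by rw [mul_pow, mul_div_assoc]

section Exchangeable

variable {Ω ι E : Type*} [MeasurableSpace Ω] [MeasurableSpace E] {ℙ : Measure Ω}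
  {Y : Ω → ι → E} {F : (ι → E) → ℝ≥0∞}

theorem Measurable.comp_perm (hY : Measurable Y) (σ : Equiv.Perm ι) :
    Measurable fun ω => Y ω ∘ σ :=
  measurable_pi_lambda _ fun i => (measurable_pi_apply (σ i)).comp hY

theorem lintegral_comp_perm_eq (hY : Measurable Y) (hF : Measurable F) {σ : Equiv.Perm ι}
    (hσ : Measure.map (fun ω => Y ω ∘ σ) ℙ = Measure.map Y ℙ) :
    ∫⁻ ω, F (Y ω ∘ σ) ∂ℙ = ∫⁻ ω, F (Y ω) ∂ℙ := by
  rw [← lintegral_map hF (hY.comp_perm σ), hσ, lintegral_map hF hY]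

theorem card_mul_lintegral_le_of_exchangeable [IsProbabilityMeasure ℙ] (hY : Measurable Y)
    (hF : Measurable F) {κ : Type*} [Fintype κ] (σ : κ → Equiv.Perm ι)
    (hexch : ∀ k, Measure.map (fun ω => Y ω ∘ σ k) ℙ = Measure.map Y ℙ) {C : ℝ≥0∞}
    (hC : ∀ ω, ∑ k, F (Y ω ∘ σ k) ≤ C) :
    Fintype.card κ * ∫⁻ ω, F (Y ω) ∂ℙ ≤ C := by
  calc Fintype.card κ * ∫⁻ ω, F (Y ω) ∂ℙ = ∑ k, ∫⁻ ω, F (Y ω ∘ σ k) ∂ℙ := by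
        simp only [lintegral_comp_perm_eq hY hF (hexch _), Finset.sum_const, Finset.card_univ,
          nsmul_eq_mul]
    _ = ∫⁻ ω, ∑ k, F (Y ω ∘ σ k) ∂ℙ :=
        (lintegral_finsetSum _ fun k _ => hF.comp (hY.comp_perm (σ k))).symm
    _ ≤ ∫⁻ _, C ∂ℙ := lintegral_mono hC
    _ = C := by simp

end Exchangeable

theorem lintegral_rpow_le_lintegral_rpow_rpow {α : Type*} [MeasurableSpace α] {μ : Measure α}
    [IsProbabilityMeasure μ] {f : α → ℝ≥0∞} (hf : AEMeasurable f μ) {q r : ℝ} (hq : 0 < q)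
    (hqr : q ≤ r) : ∫⁻ a, f a ^ q ∂μ ≤ (∫⁻ a, f a ^ r ∂μ) ^ (q / r) := by
  have h := eLpNorm'_le_eLpNorm'_of_exponent_le hq hqr μ hf.aestronglyMeasurable
  simp only [eLpNorm', enorm_eq_self] at h
  calc ∫⁻ a, f a ^ q ∂μ = ((∫⁻ a, f a ^ q ∂μ) ^ (1 / q)) ^ q := by
        rw [← ENNReal.rpow_mul, one_div_mul_cancel hq.ne', ENNReal.rpow_one]
    _ ≤ ((∫⁻ a, f a ^ r ∂μ) ^ (1 / r)) ^ q := ENNReal.rpow_le_rpow h hq.le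
    _ = (∫⁻ a, f a ^ r ∂μ) ^ (q / r) := by rw [← ENNReal.rpow_mul, one_div_mul_eq_div]

theorem lintegral_nnDist_pow_le_of_exchangeable {p n : ℕ} (hp : 1 ≤ p) {Ω : Type*}
    [MeasurableSpace Ω] {ℙ : Measure Ω} [IsProbabilityMeasure ℙ]
    {Y : Ω → Fin (n + 1) → EuclideanSpace ℝ (Fin p)} (hY : Measurable Y)
    (hcube : ∀ ω i, Y ω i ∈ euclideanBox (Fin p) 0 1)
    (hexch : ∀ σ : Equiv.Perm (Fin (n + 1)), Measure.map (fun ω => Y ω ∘ σ) ℙ = Measure.map Y ℙ) :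
    ∫⁻ ω, ENNReal.ofReal (nnDist (Y ω)) ^ (p : ℝ) ∂ℙ ≤ ENNReal.ofReal
      ((2 * (1 + √p)) ^ p / (volume (ball (0 : EuclideanSpace ℝ (Fin p)) 1)).toReal / (n + 1)) := by
  have h := card_mul_lintegral_le_of_exchangeable hY
    (measurable_nnDist.ennreal_ofReal.pow_const (p : ℝ)) (fun j => Equiv.swap 0 j)
    (fun j => hexch _) fun ω => by
      simp only [ENNReal.rpow_natCast, ← ENNReal.ofReal_pow (nnDist_nonneg _)]
      rw [← ENNReal.ofReal_sum_of_nonneg fun j _ => pow_nonneg (nnDist_nonneg _) p]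
      exact ENNReal.ofReal_le_ofReal (sum_nnDist_pow_le_of_mem_unitCube hp (Y ω) (hcube ω))
  rw [Fintype.card_fin, mul_comm, ← ENNReal.le_div_iff_mul_le (by simp) (by simp)] at h
  rw [ENNReal.ofReal_div_of_pos (by positivity), ← Nat.cast_add_one, ENNReal.ofReal_natCast]
  exact h

theorem pow_div_div_rpow_two_div {p : ℕ} (hp : p ≠ 0) {X V m : ℝ} (hX : 0 ≤ X) (hV : 0 ≤ V)
    (hm : 0 ≤ m) :
    (X ^ p / V / m) ^ ((2 : ℝ) / p) = X ^ 2 / V ^ ((2 : ℝ) / p) * (1 / m) ^ ((2 : ℝ) / p) := by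
  have hXp : (X ^ p) ^ ((2 : ℝ) / p) = X ^ 2 := by
    rw [← Real.rpow_natCast, ← Real.rpow_mul hX, mul_div_cancel₀ _ (Nat.cast_ne_zero.mpr hp),
      Real.rpow_two]
  rw [div_eq_mul_one_div _ m, Real.mul_rpow (by positivity) (by positivity),
    Real.div_rpow (by positivity) hV, hXp]

theorem stmt_2_general (p n : ℕ) (hp : 2 ≤ p)
    {Ω : Type*} [MeasurableSpace Ω] (ℙ : Measure Ω) [IsProbabilityMeasure ℙ]
    (Y : Ω → Fin (n + 1) → EuclideanSpace ℝ (Fin p)) (hY : Measurable Y)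
    (hcube : ∀ ω, ∀ i, ∀ k, Y ω i k ∈ Set.Icc (0 : ℝ) 1)
    (hexch : ∀ σ : Equiv.Perm (Fin (n + 1)),
      Measure.map (fun ω => Y ω ∘ σ) ℙ = Measure.map Y ℙ) :
    ∫ ω, (⨅ i : Fin n, dist (Y ω i.succ) (Y ω 0)) ^ 2 ∂ℙ
      ≤ (4 * (1 + Real.sqrt p) ^ 2 /
          ((volume (Metric.ball (0 : EuclideanSpace ℝ (Fin p)) 1)).toReal ^ ((2 : ℝ) / p)))
        * ((1 : ℝ) / (n + 1)) ^ ((2 : ℝ) / p) := by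
  set B := (2 * (1 + √p)) ^ p / (volume (ball (0 : EuclideanSpace ℝ (Fin p)) 1)).toReal / (n + 1)
  have hB : 0 ≤ B := by positivity
  have hnn : Measurable fun ω => nnDist (Y ω) := measurable_nnDist.comp hY
  set R : Ω → ℝ≥0∞ := fun ω => ENNReal.ofReal (nnDist (Y ω))
  have hsecond : ∫⁻ ω, R ω ^ (2 : ℝ) ∂ℙ ≤ ENNReal.ofReal (B ^ ((2 : ℝ) / p)) :=
    calc ∫⁻ ω, R ω ^ (2 : ℝ) ∂ℙ ≤ (∫⁻ ω, R ω ^ (p : ℝ) ∂ℙ) ^ ((2 : ℝ) / p) :=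
          lintegral_rpow_le_lintegral_rpow_rpow hnn.ennreal_ofReal.aemeasurable two_pos
            (by exact_mod_cast hp)
      _ ≤ ENNReal.ofReal B ^ ((2 : ℝ) / p) := ENNReal.rpow_le_rpow
          (lintegral_nnDist_pow_le_of_exchangeable (by omega) hY hcube hexch) (by positivity)
      _ = ENNReal.ofReal (B ^ ((2 : ℝ) / p)) := ENNReal.ofReal_rpow_of_nonneg hB (by positivity)
  calc ∫ ω, nnDist (Y ω) ^ 2 ∂ℙ = (∫⁻ ω, R ω ^ (2 : ℝ) ∂ℙ).toReal := by
        rw [integral_eq_lintegral_of_nonneg_ae (.of_forall fun ω => sq_nonneg _)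
          (hnn.pow_const 2).aestronglyMeasurable]
        simp only [R, ENNReal.rpow_two, ENNReal.ofReal_pow (nnDist_nonneg _)]
    _ ≤ B ^ ((2 : ℝ) / p) := ENNReal.toReal_le_of_le_ofReal (by positivity) hsecond
    _ = _ := by
        rw [pow_div_div_rpow_two_div (by omega) (by positivity) ENNReal.toReal_nonneg
          (by positivity), mul_pow, show (2 : ℝ) ^ 2 = 4 by norm_num]

/-- Expected squared nearest-neighbor distance for an exchangeable tuple of
random points in the unit cube. -/
theorem stmt_2 (p n : ℕ) (hp : 2 ≤ p) (hn : 1 ≤ n)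
    {Ω : Type*} [MeasurableSpace Ω] (ℙ : Measure Ω) [IsProbabilityMeasure ℙ]
    (Y : Ω → Fin (n + 1) → EuclideanSpace ℝ (Fin p)) (hY : Measurable Y)
    (hcube : ∀ ω, ∀ i, ∀ k, Y ω i k ∈ Set.Icc (0 : ℝ) 1)
    (hexch : ∀ σ : Equiv.Perm (Fin (n + 1)),
      Measure.map (fun ω => Y ω ∘ σ) ℙ = Measure.map Y ℙ) :
    ∫ ω, (⨅ i : Fin n, dist (Y ω i.succ) (Y ω 0)) ^ 2 ∂ℙ
      ≤ (4 * (1 + Real.sqrt p) ^ 2 /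
          ((volume (Metric.ball (0 : EuclideanSpace ℝ (Fin p)) 1)).toReal ^ ((2 : ℝ) / p)))
        * ((1 : ℝ) / (n + 1)) ^ ((2 : ℝ) / p) :=
  stmt_2_general p n hp ℙ Y hY hcube hexch
end

section
/- Let X_1, ..., X_n be i.i.d. samples from a density f on [0,1]^p that is bounded away from zero, and let X be an independent point with density f. Then the probability that X lies in the convex hull of {X_1, ..., X_n} tends to 1 as n → ∞. -/
/-!
If each of the `2^p` corner boxes `∏ₖ [0,δ] or [1-δ,1]` of the unit cube contains a sample, then
the convex hull of the samples contains the inner cube `[δ, 1-δ]^p`: a functional `⟪v, ·⟫`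
separating a point of the inner cube from the hull would be beaten by the sample in the corner
that `v` points to. Since `f ≥ c > 0` on the cube, each corner has positive mass `q`, so it is
missed by all `n` samples with probability `(1 - q)^n → 0`. Finally `P(X ∈ [δ, 1-δ]^p) → 1` as
`δ → 0`, because the boundary of the cube is Lebesgue-null.
-/

open MeasureTheory ProbabilityTheory Filter Set Topology
open scoped ENNReal

lemma le_withDensity_apply {α : Type*} [MeasurableSpace α] (μ : Measure α) {g : α → ℝ≥0∞}
    {c : ℝ≥0∞} {s : Set α} (hs : MeasurableSet s) (hc : ∀ x ∈ s, c ≤ g x) :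
    c * μ s ≤ μ.withDensity g s := by
  rw [withDensity_apply _ hs, ← setLIntegral_const]
  exact setLIntegral_mono' hs hc

section Cube

variable {ι : Type*}

def coordBox (I : ι → Set ℝ) : Set (EuclideanSpace ℝ ι) := {x | ∀ k, x k ∈ I k}

def innerCube (δ : ℝ) : Set (EuclideanSpace ℝ ι) := coordBox fun _ => Icc δ (1 - δ)

def cornerBox [DecidableEq ι] (δ : ℝ) (s : Finset ι) : Set (EuclideanSpace ℝ ι) :=
  coordBox fun k => if k ∈ s then Icc (1 - δ) 1 else Icc 0 δ

lemma innerCube_anti : Antitone (innerCube : ℝ → Set (EuclideanSpace ℝ ι)) :=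
  fun _ _ hδ _ hx k => ⟨hδ.trans (hx k).1, (hx k).2.trans (by linarith)⟩

lemma cornerBox_subset_unitCube [DecidableEq ι] {δ : ℝ} (hδ : δ ≤ 1) (s : Finset ι) :
    cornerBox δ s ⊆ coordBox fun _ => Icc 0 1 := by
  intro x hx k
  have hxk : x k ∈ if k ∈ s then Icc (1 - δ) 1 else Icc 0 δ := hx k
  split_ifs at hxk
  · exact ⟨by linarith [hxk.1], hxk.2⟩
  · exact ⟨hxk.1, hxk.2.trans hδ⟩

lemma coordBox_eq_preimage (I : ι → Set ℝ) : coordBox I = WithLp.ofLp ⁻¹' univ.pi I := by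
  ext x
  simp [coordBox]

section Measure

variable [Fintype ι]

lemma measurableSet_coordBox {I : ι → Set ℝ} (hI : ∀ k, MeasurableSet (I k)) :
    MeasurableSet (coordBox I) := by
  rw [coordBox_eq_preimage]
  exact (PiLp.volume_preserving_ofLp ι).measurable (.univ_pi hI)

lemma volume_coordBox {I : ι → Set ℝ} (hI : ∀ k, MeasurableSet (I k)) :
    volume (coordBox I) = ∏ k, volume (I k) := by
  rw [coordBox_eq_preimage, (PiLp.volume_preserving_ofLp ι).measure_preimage
    (MeasurableSet.univ_pi hI).nullMeasurableSet, volume_pi_pi]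

lemma measurableSet_innerCube (δ : ℝ) : MeasurableSet (innerCube δ : Set (EuclideanSpace ℝ ι)) :=
  measurableSet_coordBox fun _ => measurableSet_Icc

lemma measurableSet_cornerBox [DecidableEq ι] (δ : ℝ) (s : Finset ι) :
    MeasurableSet (cornerBox δ s) :=
  measurableSet_coordBox fun k => by split_ifs <;> exact measurableSet_Icc

lemma volume_cornerBox [DecidableEq ι] (δ : ℝ) (s : Finset ι) :
    volume (cornerBox δ s) = ENNReal.ofReal δ ^ Fintype.card ι := by
  rw [cornerBox, volume_coordBox fun k => by split_ifs <;> exact measurableSet_Icc]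
  have hside : ∀ k, volume (if k ∈ s then Icc (1 - δ) 1 else Icc 0 δ) = ENNReal.ofReal δ := by
    intro k
    split_ifs <;> simp [Real.volume_Icc]
  simp [hside, Finset.prod_const]

lemma ae_eq_coordBox_Ioo_Icc :
    (coordBox fun _ => Ioo (0 : ℝ) 1 : Set (EuclideanSpace ℝ ι)) =ᵐ[volume]
      coordBox fun _ => Icc 0 1 := by
  refine ae_eq_of_subset_of_measure_ge (fun x hx k => Ioo_subset_Icc_self (hx k)) ?_
    (measurableSet_coordBox fun _ => measurableSet_Ioo).nullMeasurableSet ?_ <;>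
  simp [volume_coordBox, Real.volume_Icc, Real.volume_Ioo]

/-- The complements of the inner cubes decrease to a subset of the complement of the open cube. -/
lemma tendsto_measure_innerCube_compl {ν : Measure (EuclideanSpace ℝ ι)} [IsFiniteMeasure ν]
    (hν : ν (coordBox fun _ => Ioo 0 1)ᶜ = 0) :
    Tendsto (fun m : ℕ => ν (innerCube (1 / (m + 1 : ℝ)))ᶜ) atTop (𝓝 0) := by
  have hanti : Antitone fun m : ℕ => (innerCube (1 / (m + 1 : ℝ)) : Set (EuclideanSpace ℝ ι))ᶜ :=
    fun m m' hm => compl_subset_compl.2 <| innerCube_anti <|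
      one_div_le_one_div_of_le (by positivity) (by gcongr)
  have hlim := tendsto_measure_iInter_atTop
    (fun m => (measurableSet_innerCube _).compl.nullMeasurableSet) hanti
    ⟨0, measure_ne_top ν _⟩
  suffices hnull : ν (⋂ m : ℕ, (innerCube (1 / (m + 1 : ℝ)))ᶜ) = 0 by
    rwa [hnull] at hlim
  refine measure_mono_null ?_ hν
  rw [← compl_iUnion, compl_subset_compl]
  intro x hx
  have hsmall : ∀ᶠ m : ℕ in atTop, ∀ k, 1 / (m + 1 : ℝ) < x k ∧ 1 / (m + 1 : ℝ) < 1 - x k :=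
    eventually_all.2 fun k => (tendsto_one_div_add_atTop_nhds_zero_nat.eventually_lt_const
      (hx k).1).and (tendsto_one_div_add_atTop_nhds_zero_nat.eventually_lt_const
      (sub_pos.2 (hx k).2))
  obtain ⟨m, hm⟩ := hsmall.exists
  exact mem_iUnion.2 ⟨m, fun k => ⟨(hm k).1.le, by linarith [(hm k).2]⟩⟩

lemma withDensity_compl_openCube_eq_zero {g : EuclideanSpace ℝ ι → ℝ≥0∞}
    (hg : ∀ x ∉ coordBox (fun _ => Icc 0 1), g x = 0) :
    volume.withDensity g (coordBox fun _ => Ioo 0 1)ᶜ = 0 := by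
  have hcube : MeasurableSet (coordBox fun _ => Icc (0 : ℝ) 1 : Set (EuclideanSpace ℝ ι)) :=
    measurableSet_coordBox fun _ => measurableSet_Icc
  rw [measure_congr ((withDensity_absolutelyContinuous _ _).ae_eq ae_eq_coordBox_Ioo_Icc.compl),
    withDensity_apply _ hcube.compl]
  exact setLIntegral_eq_zero hcube.compl hg

lemma withDensity_cornerBox_ne_zero [DecidableEq ι] {g : EuclideanSpace ℝ ι → ℝ≥0∞} {c : ℝ≥0∞}
    (hc : c ≠ 0) (hg : ∀ x ∈ coordBox (fun _ => Icc 0 1), c ≤ g x) {δ : ℝ} (hδ₀ : 0 < δ)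
    (hδ₁ : δ ≤ 1) (s : Finset ι) : volume.withDensity g (cornerBox δ s) ≠ 0 := by
  have hvol : volume (cornerBox δ s) ≠ 0 := by
    rw [volume_cornerBox]
    exact pow_ne_zero _ (ENNReal.ofReal_pos.2 hδ₀).ne'
  exact ((ENNReal.mul_pos hc hvol).trans_le (le_withDensity_apply volume
    (measurableSet_cornerBox δ s) fun x hx => hg x (cornerBox_subset_unitCube hδ₁ s hx))).ne'

end Measure

section ConvexHull

variable [Fintype ι]

theorem EuclideanSpace.mem_convexHull_of_forall_orthant {S : Set (EuclideanSpace ℝ ι)}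
    {x : EuclideanSpace ℝ ι}
    (h : ∀ s : Finset ι, ∃ y ∈ S, (∀ k ∈ s, x k ≤ y k) ∧ ∀ k ∉ s, y k ≤ x k) :
    x ∈ convexHull ℝ S := by
  classical
  choose y hyS hy using h
  refine convexHull_mono (range_subset_iff.2 hyS) ?_
  by_contra hx
  obtain ⟨g, u, hg, hu⟩ := geometric_hahn_banach_closed_point (convex_convexHull ℝ _)
    ((finite_range y).isCompact_convexHull ℝ).isClosed hx
  set v := (InnerProductSpace.toDual ℝ (EuclideanSpace ℝ ι)).symm g
  have hle : g x ≤ g (y (Finset.univ.filter fun k => 0 < v k)) := by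
    rw [← InnerProductSpace.toDual_symm_apply, ← InnerProductSpace.toDual_symm_apply,
      PiLp.inner_apply, PiLp.inner_apply]
    refine Finset.sum_le_sum fun k _ => ?_
    simp only [RCLike.inner_apply, conj_trivial]
    rcases lt_or_ge 0 (v k) with hv | hv
    · exact mul_le_mul_of_nonneg_right ((hy _).1 k (by simp [hv])) hv.le
    · exact mul_le_mul_of_nonpos_right ((hy _).2 k (by simp [hv.not_gt])) hv
  exact (hg _ (subset_convexHull ℝ _ (mem_range_self _))).not_ge (hu.le.trans hle)

lemma innerCube_subset_convexHull [DecidableEq ι] {δ : ℝ} {S : Set (EuclideanSpace ℝ ι)}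
    (hS : ∀ s, (S ∩ cornerBox δ s).Nonempty) : innerCube δ ⊆ convexHull ℝ S := by
  intro x hx
  refine EuclideanSpace.mem_convexHull_of_forall_orthant fun s => ?_
  obtain ⟨y, hyS, hy⟩ := hS s
  refine ⟨y, hyS, fun k hk => ?_, fun k hk => ?_⟩
  · have hyk : y k ∈ Icc (1 - δ) 1 := by simpa [hk] using hy k
    linarith [(hx k).2, hyk.1]
  · have hyk : y k ∈ Icc 0 δ := by simpa [hk] using hy k
    linarith [(hx k).1, hyk.2]

lemma compl_setOf_mem_convexHull_subset [DecidableEq ι] {Ω : Type*} (Y : Ω → EuclideanSpace ℝ ι)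
    (X : ℕ → Ω → EuclideanSpace ℝ ι) (δ : ℝ) (n : ℕ) :
    {ω | Y ω ∈ convexHull ℝ (range fun i : Fin n => X i ω)}ᶜ ⊆
      Y ⁻¹' (innerCube δ)ᶜ ∪ {ω | ∃ s, ∀ i : Fin n, X i ω ∉ cornerBox δ s} := by
  refine compl_subset_comm.1 fun ω hω => ?_
  simp only [compl_union, mem_inter_iff, mem_compl_iff, mem_preimage, not_not, mem_ofPred_eq,
    not_exists, not_forall] at hω
  exact innerCube_subset_convexHull
    (fun s => (hω.2 s).elim fun i hi => ⟨_, mem_range_self i, hi⟩) hω.1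

end ConvexHull

end Cube

namespace ProbabilityTheory

variable {Ω E : Type*} [MeasurableSpace Ω] [MeasurableSpace E] {μ : Measure Ω}
  [IsProbabilityMeasure μ] {X : ℕ → Ω → E} {ν : Measure E}

lemma iIndepFun.measure_forall_notMem (hX : ∀ i, Measurable (X i)) (hind : iIndepFun X μ)
    (hlaw : ∀ i, μ.map (X i) = ν) (n : ℕ) {B : Set E} (hB : MeasurableSet B) :
    μ {ω | ∀ i : Fin n, X i ω ∉ B} = (1 - ν B) ^ n := by
  have hevent : {ω | ∀ i : Fin n, X i ω ∉ B} = ⋂ i : Fin n, (X i ⁻¹' B)ᶜ := by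
    ext
    simp
  rw [hevent, (hind.precomp Fin.val_injective).meas_iInter
    (s := fun i : Fin n => (X i ⁻¹' B)ᶜ) fun i => ⟨Bᶜ, hB.compl, rfl⟩]
  simp only [prob_compl_eq_one_sub (hX _ hB), ← Measure.map_apply (hX _) hB, hlaw,
    Finset.prod_const, Finset.card_univ, Fintype.card_fin]

lemma iIndepFun.tendsto_measure_exists_forall_notMem {κ : Type*} [Fintype κ]
    (hX : ∀ i, Measurable (X i)) (hind : iIndepFun X μ) (hlaw : ∀ i, μ.map (X i) = ν)
    {B : κ → Set E} (hB : ∀ j, MeasurableSet (B j)) (hpos : ∀ j, ν (B j) ≠ 0) :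
    Tendsto (fun n => μ {ω | ∃ j, ∀ i : Fin n, X i ω ∉ B j}) atTop (𝓝 0) := by
  have hgeom : Tendsto (fun n => ∑ j, (1 - ν (B j)) ^ n) atTop (𝓝 0) := by
    simpa using tendsto_finsetSum Finset.univ fun j _ =>
      ENNReal.tendsto_pow_atTop_nhds_zero_of_lt_one
        (ENNReal.sub_lt_self ENNReal.one_ne_top one_ne_zero (hpos j))
  refine tendsto_of_tendsto_of_tendsto_of_le_of_le tendsto_const_nhds hgeom
    (fun _ => zero_le) fun n => ?_
  calc μ {ω | ∃ j, ∀ i : Fin n, X i ω ∉ B j}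
      ≤ μ (⋃ j, {ω | ∀ i : Fin n, X i ω ∉ B j}) := measure_mono fun _ hω => mem_iUnion.2 hω
    _ ≤ ∑ j, μ {ω | ∀ i : Fin n, X i ω ∉ B j} := measure_iUnion_fintype_le μ _
    _ = ∑ j, (1 - ν (B j)) ^ n := by
      simp only [hind.measure_forall_notMem hX hlaw n (hB _)]

end ProbabilityTheory

lemma tendsto_measure_of_tendsto_measure_compl {Ω : Type*} [MeasurableSpace Ω] {μ : Measure Ω}
    [IsProbabilityMeasure μ] {A : ℕ → Set Ω} (h : Tendsto (fun n => μ (A n)ᶜ) atTop (𝓝 0)) :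
    Tendsto (fun n => μ (A n)) atTop (𝓝 1) := by
  have hlower : Tendsto (fun n => 1 - μ (A n)ᶜ) atTop (𝓝 1) := by
    simpa using ENNReal.Tendsto.sub tendsto_const_nhds h (.inl ENNReal.one_ne_top)
  refine tendsto_of_tendsto_of_tendsto_of_le_of_le hlower tendsto_const_nhds (fun n => ?_)
    fun _ => prob_le_one
  rw [tsub_le_iff_right, ← measure_univ (μ := μ), ← union_compl_self (A n)]
  exact measure_union_le _ _

theorem stmt_4_general (p : ℕ)
    (f : EuclideanSpace ℝ (Fin p) → ℝ)
    (c : ℝ) (hc : 0 < c)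
    (hlb : ∀ x, (∀ k, x k ∈ Set.Icc (0 : ℝ) 1) → c ≤ f x)
    (hout : ∀ x, ¬ (∀ k, x k ∈ Set.Icc (0 : ℝ) 1) → f x = 0)
    {Ω : Type*} [MeasurableSpace Ω] (μ : Measure Ω) [IsProbabilityMeasure μ]
    (W : ℕ → Ω → EuclideanSpace ℝ (Fin p)) (hW : ∀ i, Measurable (W i))
    (hiid : iIndepFun W μ)
    (hlaw : ∀ i, Measure.map (W i) μ
      = volume.withDensity (fun x => ENNReal.ofReal (f x))) :
    Filter.Tendsto
      (fun n : ℕ => μ {ω | W 0 ω ∈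
        convexHull ℝ (Set.range (fun i : Fin n => W (i + 1 : ℕ) ω))})
      Filter.atTop (nhds 1) := by
  set ν := volume.withDensity fun x => ENNReal.ofReal (f x)
  have : IsProbabilityMeasure ν := hlaw 0 ▸ Measure.isProbabilityMeasure_map (hW 0).aemeasurable
  refine tendsto_measure_of_tendsto_measure_compl (ENNReal.tendsto_nhds_zero.2 fun ε hε => ?_)
  have hν : ν (coordBox fun _ => Ioo 0 1)ᶜ = 0 :=
    withDensity_compl_openCube_eq_zero fun x hx => by simp [hout x hx]
  obtain ⟨m, hm⟩ := ((tendsto_measure_innerCube_compl hν).eventually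
    (eventually_le_nhds (ENNReal.half_pos hε.ne'))).exists
  set δ : ℝ := 1 / (m + 1)
  have hcorner : ∀ s, ν (cornerBox δ s) ≠ 0 :=
    withDensity_cornerBox_ne_zero (by simpa using hc) (fun x hx => ENNReal.ofReal_le_ofReal
      (hlb x hx)) (by positivity) (div_le_one_of_le₀ (by simp) (by positivity))
  set X : ℕ → Ω → EuclideanSpace ℝ (Fin p) := fun i => W (i + 1)
  filter_upwards [((hiid.precomp Nat.succ_injective).tendsto_measure_exists_forall_notMem
    (fun _ => hW _) (fun _ => hlaw _) (measurableSet_cornerBox δ) hcorner).eventually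
    (eventually_le_nhds (ENNReal.half_pos hε.ne'))] with n hn
  calc μ {ω | W 0 ω ∈ convexHull ℝ (range fun i : Fin n => X i ω)}ᶜ
      ≤ μ (W 0 ⁻¹' (innerCube δ)ᶜ) + μ {ω | ∃ s, ∀ i : Fin n, X i ω ∉ cornerBox δ s} :=
        (measure_mono (compl_setOf_mem_convexHull_subset _ _ δ n)).trans (measure_union_le _ _)
    _ = ν (innerCube δ)ᶜ + μ {ω | ∃ s, ∀ i : Fin n, X i ω ∉ cornerBox δ s} := by
        rw [← Measure.map_apply (hW 0) (measurableSet_innerCube δ).compl, hlaw 0]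
    _ ≤ ε / 2 + ε / 2 := add_le_add hm hn
    _ = ε := ENNReal.add_halves ε

/-- The probability that an independent point with density `f` lies in the
convex hull of `n` i.i.d. samples from `f` tends to one. -/
theorem stmt_4 (p : ℕ) (hp : 1 ≤ p)
    (f : EuclideanSpace ℝ (Fin p) → ℝ) (hf : Measurable f)
    (c : ℝ) (hc : 0 < c)
    (hlb : ∀ x, (∀ k, x k ∈ Set.Icc (0 : ℝ) 1) → c ≤ f x)
    (hout : ∀ x, ¬ (∀ k, x k ∈ Set.Icc (0 : ℝ) 1) → f x = 0)
    (hprob : IsProbabilityMeasure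
      (volume.withDensity (fun x => ENNReal.ofReal (f x))))
    {Ω : Type*} [MeasurableSpace Ω] (μ : Measure Ω) [IsProbabilityMeasure μ]
    (W : ℕ → Ω → EuclideanSpace ℝ (Fin p)) (hW : ∀ i, Measurable (W i))
    (hiid : iIndepFun W μ)
    (hlaw : ∀ i, Measure.map (W i) μ
      = volume.withDensity (fun x => ENNReal.ofReal (f x))) :
    Filter.Tendsto
      (fun n : ℕ => μ {ω | W 0 ω ∈
        convexHull ℝ (Set.range (fun i : Fin n => W (i + 1 : ℕ) ω))})
      Filter.atTop (nhds 1) :=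
  stmt_4_general p f c hc hlb hout μ W hW hiid hlaw
end

section
/- For any δ ∈ (0, 1/2), if a finite set S ⊂ [0,1]^p contains at least one point in each of the 2^p closed δ-cube neighborhoods of the vertices of [0,1]^p (i.e., for every vertex v of the cube there is s ∈ S with ‖s - v‖_∞ ≤ δ), then the convex hull of S contains the cube [δ, 1-δ]^p. -/
/-!
By Hahn–Banach it suffices to show that every linear functional `y ↦ ⟪a, y⟫` is at least as
large at some point of `S` as at `x`. Take the vertex `v` with `v k = 1` where `a k ≥ 0` and
`v k = 0` otherwise, and a point `s ∈ S` within `δ` of it: coordinatewise, `s k ≥ 1 - δ ≥ x k`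
where `a k ≥ 0` and `s k ≤ δ ≤ x k` where `a k < 0`, so `⟪a, x⟫ ≤ ⟪a, s⟫`.
-/

open Set

theorem Set.Finite.mem_convexHull_of_forall_exists_le {E : Type*} [AddCommGroup E] [Module ℝ E]
    [TopologicalSpace E] [IsTopologicalAddGroup E] [ContinuousSMul ℝ E] [LocallyConvexSpace ℝ E]
    [T2Space E] {s : Set E} (hs : s.Finite) {x : E}
    (h : ∀ f : StrongDual ℝ E, ∃ y ∈ s, f x ≤ f y) : x ∈ convexHull ℝ s := by
  by_contra hx
  obtain ⟨f, u, hfs, hfx⟩ :=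
    geometric_hahn_banach_closed_point (convex_convexHull ℝ s) (hs.isClosed_convexHull ℝ) hx
  obtain ⟨y, hy, hxy⟩ := h f
  linarith [hfs y (subset_convexHull ℝ s hy)]

theorem Set.Finite.mem_convexHull_of_forall_exists_inner_le {E : Type*}
    [NormedAddCommGroup E] [InnerProductSpace ℝ E] [CompleteSpace E] {s : Set E} (hs : s.Finite)
    {x : E} (h : ∀ a : E, ∃ y ∈ s, inner ℝ a x ≤ inner ℝ a y) : x ∈ convexHull ℝ s :=
  hs.mem_convexHull_of_forall_exists_le fun f => by
    simpa only [InnerProductSpace.toDual_symm_apply] using h ((InnerProductSpace.toDual ℝ E).symm f)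

theorem mul_le_mul_of_abs_sub_ite_le {δ c x y : ℝ} (hx : x ∈ Icc δ (1 - δ))
    (hy : |y - if 0 ≤ c then 1 else 0| ≤ δ) : x * c ≤ y * c := by
  obtain ⟨hδx, hx1⟩ := hx
  obtain ⟨hy₁, hy₂⟩ := abs_le.mp hy
  split_ifs at hy₁ hy₂ with hc
  · exact mul_le_mul_of_nonneg_right (by linarith) hc
  · exact mul_le_mul_of_nonpos_right (by linarith) (le_of_not_ge hc)

theorem stmt_5_general (p : ℕ) (δ : ℝ)
    (S : Finset (EuclideanSpace ℝ (Fin p)))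
    (hvert : ∀ v : EuclideanSpace ℝ (Fin p), (∀ k, v k = 0 ∨ v k = 1) →
      ∃ s ∈ S, ∀ k, |s k - v k| ≤ δ) :
    {x : EuclideanSpace ℝ (Fin p) | ∀ k, x k ∈ Set.Icc δ (1 - δ)}
      ⊆ convexHull ℝ (S : Set (EuclideanSpace ℝ (Fin p))) := by
  intro x hx
  refine S.finite_toSet.mem_convexHull_of_forall_exists_inner_le fun a => ?_
  let v : EuclideanSpace ℝ (Fin p) := WithLp.toLp 2 fun k => if 0 ≤ a k then 1 else 0
  obtain ⟨s, hsS, hs⟩ := hvert v fun k => (ite_eq_or_eq _ _ _).symm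
  refine ⟨s, hsS, ?_⟩
  simp only [PiLp.inner_apply, RCLike.inner_apply, conj_trivial]
  exact Finset.sum_le_sum fun k _ => mul_le_mul_of_abs_sub_ite_le (hx k) (hs k)

/-- If a finite set `S ⊆ [0,1]^p` contains a point in each `δ`-cube
neighborhood of every vertex of the unit cube, then its convex hull contains
the inner cube `[δ, 1-δ]^p`. -/
theorem stmt_5 (p : ℕ) (hp : 1 ≤ p) (δ : ℝ) (hδ0 : 0 < δ) (hδ1 : δ < 1 / 2)
    (S : Finset (EuclideanSpace ℝ (Fin p)))
    (hS : ∀ s ∈ S, ∀ k, s k ∈ Set.Icc (0 : ℝ) 1)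
    (hvert : ∀ v : EuclideanSpace ℝ (Fin p), (∀ k, v k = 0 ∨ v k = 1) →
      ∃ s ∈ S, ∀ k, |s k - v k| ≤ δ) :
    {x : EuclideanSpace ℝ (Fin p) | ∀ k, x k ∈ Set.Icc δ (1 - δ)}
      ⊆ convexHull ℝ (S : Set (EuclideanSpace ℝ (Fin p))) :=
  stmt_5_general p δ S hvert
end

section
/- Let X be a random variable taking values in [0,1], R_B = E[min(X, 1-X)], and R = E[2 min(X,1-X)(1 - min(X,1-X))]. Then R = 2 R_B (1 - R_B) - 2 Var(min(X, 1-X)), and consequently R_B ≤ R ≤ 2 R_B (1 - R_B). -/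
/-! Since `2t(1-t) = 2t - 2t²` and `E[Y²] = (E Y)² + Var Y`, the identity holds for every square
integrable `Y`; the upper bound is `Var Y ≥ 0`, and the lower bound is the pointwise inequality
`t ≤ 2t(1-t)` on `[0, 1/2]`, where `Y = min(X, 1-X)` takes its values. -/

open MeasureTheory ProbabilityTheory

lemma le_two_mul_mul_one_sub {t : ℝ} (h0 : 0 ≤ t) (h1 : t ≤ 1 / 2) : t ≤ 2 * t * (1 - t) := by
  nlinarith

lemma min_one_sub_mem_Icc {x : ℝ} (hx : x ∈ Set.Icc (0 : ℝ) 1) :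
    min x (1 - x) ∈ Set.Icc (0 : ℝ) (1 / 2) :=
  ⟨le_min hx.1 (by linarith [hx.2]),
    min_le_iff.2 ((le_total x (1 / 2)).imp id fun h => by linarith)⟩

section

variable {Ω : Type*}

lemma fun_two_mul_mul_one_sub_eq (Y : Ω → ℝ) :
    (fun ω => 2 * Y ω * (1 - Y ω)) = fun ω => 2 * Y ω - 2 * Y ω ^ 2 := by
  funext ω; ring

variable [MeasurableSpace Ω] {μ : Measure Ω} {Y : Ω → ℝ} [IsFiniteMeasure μ]

lemma MeasureTheory.MemLp.integrable_two_mul_mul_one_sub (hY : MemLp Y 2 μ) :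
    Integrable (fun ω => 2 * Y ω * (1 - Y ω)) μ := by
  rw [fun_two_mul_mul_one_sub_eq]
  exact ((hY.integrable one_le_two).const_mul 2).sub (hY.integrable_sq.const_mul 2)

lemma integral_two_mul_mul_one_sub (hY : MemLp Y 2 μ) :
    ∫ ω, 2 * Y ω * (1 - Y ω) ∂μ = 2 * ∫ ω, Y ω ∂μ - 2 * ∫ ω, Y ω ^ 2 ∂μ := by
  rw [fun_two_mul_mul_one_sub_eq, integral_sub ((hY.integrable one_le_two).const_mul 2)
    (hY.integrable_sq.const_mul 2), integral_const_mul, integral_const_mul]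

lemma integral_le_integral_two_mul_mul_one_sub (hY : MemLp Y 2 μ)
    (hbd : ∀ᵐ ω ∂μ, Y ω ∈ Set.Icc (0 : ℝ) (1 / 2)) :
    ∫ ω, Y ω ∂μ ≤ ∫ ω, 2 * Y ω * (1 - Y ω) ∂μ :=
  integral_mono_ae (hY.integrable one_le_two) hY.integrable_two_mul_mul_one_sub
    (hbd.mono fun _ h => le_two_mul_mul_one_sub h.1 h.2)

variable [IsProbabilityMeasure μ]

lemma integral_two_mul_mul_one_sub_eq_sub_variance (hY : MemLp Y 2 μ) :
    ∫ ω, 2 * Y ω * (1 - Y ω) ∂μ = 2 * μ[Y] * (1 - μ[Y]) - 2 * variance Y μ := by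
  rw [integral_two_mul_mul_one_sub hY, variance_eq_sub hY]
  simp only [Pi.pow_apply]
  ring

lemma integral_two_mul_mul_one_sub_le (hY : MemLp Y 2 μ) :
    ∫ ω, 2 * Y ω * (1 - Y ω) ∂μ ≤ 2 * μ[Y] * (1 - μ[Y]) := by
  rw [integral_two_mul_mul_one_sub_eq_sub_variance hY]
  linarith [variance_nonneg Y μ]

end

/-- Cover–Hart-type bound: with `R_B = E[min(X,1-X)]` and
`R = E[2 min(X,1-X)(1-min(X,1-X))]`, one has
`R = 2R_B(1-R_B) - 2 Var(min(X,1-X))` and `R_B ≤ R ≤ 2R_B(1-R_B)`. -/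
theorem stmt_12 {Ω : Type*} [MeasurableSpace Ω]
    (μ : Measure Ω) [IsProbabilityMeasure μ]
    (X : Ω → ℝ) (hX : Measurable X) (hX01 : ∀ ω, X ω ∈ Set.Icc (0 : ℝ) 1) :
    (∫ ω, 2 * min (X ω) (1 - X ω) * (1 - min (X ω) (1 - X ω)) ∂μ
        = 2 * (∫ ω, min (X ω) (1 - X ω) ∂μ)
            * (1 - ∫ ω, min (X ω) (1 - X ω) ∂μ)
          - 2 * variance (fun ω => min (X ω) (1 - X ω)) μ)
    ∧ (∫ ω, min (X ω) (1 - X ω) ∂μ)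
        ≤ ∫ ω, 2 * min (X ω) (1 - X ω) * (1 - min (X ω) (1 - X ω)) ∂μ
    ∧ ∫ ω, 2 * min (X ω) (1 - X ω) * (1 - min (X ω) (1 - X ω)) ∂μ
        ≤ 2 * (∫ ω, min (X ω) (1 - X ω) ∂μ)
            * (1 - ∫ ω, min (X ω) (1 - X ω) ∂μ) := by
  have hbd : ∀ᵐ ω ∂μ, min (X ω) (1 - X ω) ∈ Set.Icc (0 : ℝ) (1 / 2) :=
    .of_forall fun ω => min_one_sub_mem_Icc (hX01 ω)
  have hmem : MemLp (fun ω => min (X ω) (1 - X ω)) 2 μ :=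
    memLp_of_bounded hbd (hX.min (measurable_const.sub hX)).aestronglyMeasurable 2
  exact ⟨integral_two_mul_mul_one_sub_eq_sub_variance hmem,
    integral_le_integral_two_mul_mul_one_sub hmem hbd, integral_two_mul_mul_one_sub_le hmem⟩
end
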